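/- For every β > 0 and K > 0: min_{μ ∈ P} {R(μ|ρ_β) − βK (μ₁ − μ₋₁)²} = min_{z ∈ [−1,1]} {J_β(z) − βK z²}, and both minima are attained. -/

import Mathlib

/-!
For a probability vector `μ` with mean `m` and the exponential tilt
`ν_t(i) = ρ_β(i) e^{t i - c_β(t)}` of `ρ_β` (a probability vector because `e^{c_β}` is the moment
generating function of `ρ_β`), one has `R(μ|ν_t) = R(μ|ρ_β) - t m + c_β(t)`. Gibbs' inequality
`R(μ|ν_t) ≥ 0` gives `J_β(m) ≤ R(μ|ρ_β)`, with equality for `μ = ν_t` when `m` is the mean of `ν_t`.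
Every `z ∈ [0,1)` is such a mean by the intermediate value theorem, `z = 1` is reached in the limit
`t → ∞`, and `z < 0` follows from the symmetry `i ↦ -i`. So `J_β(z)` is the minimum of `R(·|ρ_β)`
over the vectors of mean `z`, and minimising `R(μ|ρ_β) - βK m(μ)²` over the compact simplex is the
same as minimising `J_β(z) - βK z²` over `[-1,1]`.
-/

noncomputable section

/-- `μ = (μ₋₁, μ₀, μ₁)` is a probability vector on `Λ = {-1,0,1}`. -/
def IsProbVec (μ : ℝ × ℝ × ℝ) : Prop :=
  0 ≤ μ.1 ∧ 0 ≤ μ.2.1 ∧ 0 ≤ μ.2.2 ∧ μ.1 + μ.2.1 + μ.2.2 = 1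

/-- The measure `ρ_β` with `ρ_β(±1) = e^{−β}/(1+2e^{−β})` and `ρ_β(0) = 1/(1+2e^{−β})`. -/
def rhoBeta (β : ℝ) : ℝ × ℝ × ℝ :=
  (Real.exp (-β) / (1 + 2 * Real.exp (-β)),
   1 / (1 + 2 * Real.exp (-β)),
   Real.exp (-β) / (1 + 2 * Real.exp (-β)))

/-- Relative entropy `R(μ|ρ_β) = Σᵢ μᵢ log(μᵢ/ρ_β(i))` (the convention
`0 · log 0 = 0` holds automatically since `Real.log 0 = 0`). -/
def relEntB (β : ℝ) (μ : ℝ × ℝ × ℝ) : ℝ :=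
  μ.1 * Real.log (μ.1 / (rhoBeta β).1) + μ.2.1 * Real.log (μ.2.1 / (rhoBeta β).2.1)
    + μ.2.2 * Real.log (μ.2.2 / (rhoBeta β).2.2)

/-- `c_β(t) = log[(1 + e^{−β}(e^t + e^{−t}))/(1 + 2e^{−β})]`. -/
def cBeta (β t : ℝ) : ℝ :=
  Real.log ((1 + Real.exp (-β) * (Real.exp t + Real.exp (-t))) / (1 + 2 * Real.exp (-β)))

/-- `J_β(z) = sup_{t ∈ ℝ} {t z − c_β(t)}`, the Legendre–Fenchel transform of `c_β`
(finite on `[-1,1]`, where it is used below). -/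
def Jbeta (β z : ℝ) : ℝ := ⨆ t : ℝ, (t * z - cBeta β t)

open Real Set Filter Topology

lemma sub_le_mul_log_div {a b : ℝ} (ha : 0 ≤ a) (hb : 0 < b) : a - b ≤ a * log (a / b) := by
  have h := mul_nonneg hb.le (InformationTheory.klFun_nonneg (div_nonneg ha hb.le))
  rw [InformationTheory.klFun_apply, mul_sub, mul_add, ← mul_assoc, mul_div_cancel₀ _ hb.ne',
    mul_one] at h
  linarith

lemma mul_log_div_mul_exp (x : ℝ) {p : ℝ} (hp : p ≠ 0) (s : ℝ) :
    x * log (x / (p * exp s)) = x * log (x / p) - x * s := by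
  rcases eq_or_ne x 0 with rfl | hx
  · simp
  · rw [← div_div, log_div (div_ne_zero hx hp) (exp_ne_zero s), log_exp, mul_sub]

-- For `r = 0` the function is identically `0`, since `x / 0 = 0` and `log 0 = 0`.
lemma continuous_mul_log_div (r : ℝ) : Continuous fun x : ℝ => x * log (x / r) := by
  rcases eq_or_ne r 0 with rfl | hr
  · simpa using continuous_const
  · have h (x : ℝ) : x * log (x / r) = x * log x - x * log r := by
      rcases eq_or_ne x 0 with rfl | hx
      · simp
      · rw [log_div hx hr, mul_sub]
    simp only [h]
    fun_prop

lemma IsMinOn.csInf_image_eq {α β : Type*} [ConditionallyCompleteLinearOrder β] {f : α → β}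
    {s : Set α} {a : α} (h : IsMinOn f s a) (ha : a ∈ s) : sInf (f '' s) = f a :=
  IsLeast.csInf_eq ⟨mem_image_of_mem f ha, forall_mem_image.2 h⟩

def relEnt (μ ν : ℝ × ℝ × ℝ) : ℝ :=
  μ.1 * log (μ.1 / ν.1) + μ.2.1 * log (μ.2.1 / ν.2.1) + μ.2.2 * log (μ.2.2 / ν.2.2)

lemma relEnt_self (μ : ℝ × ℝ × ℝ) : relEnt μ μ = 0 := by
  have h (x : ℝ) : x * log (x / x) = 0 := by
    rcases eq_or_ne x 0 with rfl | hx
    · simp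
    · simp [div_self hx]
  simp only [relEnt, h, add_zero]

lemma continuous_relEnt (ν : ℝ × ℝ × ℝ) : Continuous fun μ => relEnt μ ν :=
  (((continuous_mul_log_div _).comp continuous_fst).add
    ((continuous_mul_log_div _).comp (continuous_fst.comp continuous_snd))).add
    ((continuous_mul_log_div _).comp (continuous_snd.comp continuous_snd))

lemma relEnt_nonneg {μ ν : ℝ × ℝ × ℝ} (hμ : IsProbVec μ) (hν : ν.1 + ν.2.1 + ν.2.2 = 1)
    (h₁ : 0 < ν.1) (h₂ : 0 < ν.2.1) (h₃ : 0 < ν.2.2) : 0 ≤ relEnt μ ν := by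
  obtain ⟨hμ₁, hμ₂, hμ₃, hμ⟩ := hμ
  have := sub_le_mul_log_div hμ₁ h₁
  have := sub_le_mul_log_div hμ₂ h₂
  have := sub_le_mul_log_div hμ₃ h₃
  unfold relEnt
  linarith

lemma continuous_relEntB (β : ℝ) : Continuous (relEntB β) := continuous_relEnt (rhoBeta β)

lemma isCompact_setOf_isProbVec : IsCompact {μ : ℝ × ℝ × ℝ | IsProbVec μ} := by
  have hclosed : IsClosed {μ : ℝ × ℝ × ℝ | IsProbVec μ} := by
    simp only [IsProbVec, Set.ofPred_and]
    refine (isClosed_le continuous_const (by fun_prop)).inter <|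
      (isClosed_le continuous_const (by fun_prop)).inter <|
      (isClosed_le continuous_const (by fun_prop)).inter
      (isClosed_eq (by fun_prop) continuous_const)
  have hsub : {μ : ℝ × ℝ × ℝ | IsProbVec μ} ⊆ Icc 0 1 ×ˢ (Icc 0 1 ×ˢ Icc 0 1) := by
    rintro ⟨a, b, c⟩ ⟨ha, hb, hc, habc⟩
    exact ⟨⟨ha, by linarith⟩, ⟨hb, by linarith⟩, ⟨hc, by linarith⟩⟩
  exact (isCompact_Icc.prod (isCompact_Icc.prod isCompact_Icc)).of_isClosed_subset hclosed hsub

def mean (μ : ℝ × ℝ × ℝ) : ℝ := μ.2.2 - μ.1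

lemma mean_mem_Icc {μ : ℝ × ℝ × ℝ} (hμ : IsProbVec μ) : mean μ ∈ Icc (-1 : ℝ) 1 := by
  obtain ⟨h₁, h₂, h₃, h⟩ := hμ
  constructor <;> unfold mean <;> linarith

lemma continuous_mean : Continuous mean :=
  (continuous_snd.comp continuous_snd).sub continuous_fst

def reflect (μ : ℝ × ℝ × ℝ) : ℝ × ℝ × ℝ := (μ.2.2, μ.2.1, μ.1)

lemma IsProbVec.reflect {μ : ℝ × ℝ × ℝ} (hμ : IsProbVec μ) : IsProbVec (reflect μ) := by
  obtain ⟨h₁, h₂, h₃, h⟩ := hμ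
  exact ⟨h₃, h₂, h₁, by simp only [_root_.reflect]; linarith⟩

lemma mean_reflect (μ : ℝ × ℝ × ℝ) : mean (reflect μ) = -mean μ := by
  simp only [mean, reflect]; ring

lemma relEntB_reflect (β : ℝ) (μ : ℝ × ℝ × ℝ) : relEntB β (reflect μ) = relEntB β μ := by
  simp only [relEntB, reflect, rhoBeta]; ring

lemma rhoBeta_pos (β : ℝ) : 0 < (rhoBeta β).1 ∧ 0 < (rhoBeta β).2.1 ∧ 0 < (rhoBeta β).2.2 := by
  simp only [rhoBeta]
  exact ⟨by positivity, by positivity, by positivity⟩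

lemma cBeta_neg (β t : ℝ) : cBeta β (-t) = cBeta β t := by
  simp only [cBeta, neg_neg, add_comm (exp t)]

lemma Jbeta_neg (β z : ℝ) : Jbeta β (-z) = Jbeta β z := by
  rw [Jbeta, ← neg_surjective.iSup_comp]
  simp only [neg_mul_neg, cBeta_neg, Jbeta]

lemma exp_cBeta (β t : ℝ) :
    exp (cBeta β t) = (rhoBeta β).1 * exp (-t) + (rhoBeta β).2.1 + (rhoBeta β).2.2 * exp t := by
  rw [cBeta, exp_log (by positivity)]
  simp only [rhoBeta]
  field_simp
  ring

lemma continuous_cBeta (β : ℝ) : Continuous (cBeta β) :=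
  Continuous.log (by fun_prop) fun t => by positivity

lemma abs_add_log_le_cBeta (β t : ℝ) : |t| + log (rhoBeta β).2.2 ≤ cBeta β t := by
  obtain ⟨h₁, h₂, h₃⟩ := rhoBeta_pos β
  have h : (rhoBeta β).2.2 * exp |t| ≤ exp (cBeta β t) := by
    rw [exp_cBeta]
    have := exp_pos t
    have := exp_pos (-t)
    rcases abs_cases t with ⟨ht, -⟩ | ⟨ht, -⟩ <;> rw [ht]
    · nlinarith
    · change (rhoBeta β).1 * exp (-t) ≤ _
      nlinarith
  have := log_le_log (by positivity) h
  rwa [log_mul h₃.ne' (exp_ne_zero _), log_exp, log_exp, add_comm] at this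

def tilt (β t : ℝ) : ℝ × ℝ × ℝ :=
  ((rhoBeta β).1 * exp (-t - cBeta β t), (rhoBeta β).2.1 * exp (-cBeta β t),
    (rhoBeta β).2.2 * exp (t - cBeta β t))

lemma tilt_pos (β t : ℝ) : 0 < (tilt β t).1 ∧ 0 < (tilt β t).2.1 ∧ 0 < (tilt β t).2.2 := by
  obtain ⟨h₁, h₂, h₃⟩ := rhoBeta_pos β
  exact ⟨by simp only [tilt]; positivity, by simp only [tilt]; positivity,
    by simp only [tilt]; positivity⟩

lemma tilt_sum (β t : ℝ) : (tilt β t).1 + (tilt β t).2.1 + (tilt β t).2.2 = 1 := by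
  simp only [tilt, sub_eq_add_neg, exp_add]
  have := exp_cBeta β t
  rw [exp_neg (cBeta β t)]
  field_simp
  linarith

lemma isProbVec_tilt (β t : ℝ) : IsProbVec (tilt β t) :=
  let ⟨h₁, h₂, h₃⟩ := tilt_pos β t
  ⟨h₁.le, h₂.le, h₃.le, tilt_sum β t⟩

lemma continuous_tilt (β : ℝ) : Continuous (tilt β) := by
  have := continuous_cBeta β
  unfold tilt
  fun_prop

lemma relEnt_tilt (β t : ℝ) {μ : ℝ × ℝ × ℝ} (hμ : μ.1 + μ.2.1 + μ.2.2 = 1) :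
    relEnt μ (tilt β t) = relEntB β μ - t * mean μ + cBeta β t := by
  obtain ⟨h₁, h₂, h₃⟩ := rhoBeta_pos β
  simp only [relEnt, tilt, mul_log_div_mul_exp _ h₁.ne', mul_log_div_mul_exp _ h₂.ne',
    mul_log_div_mul_exp _ h₃.ne', relEntB, mean]
  linear_combination cBeta β t * hμ

lemma relEntB_tilt (β t : ℝ) : relEntB β (tilt β t) = t * mean (tilt β t) - cBeta β t := by
  have := relEnt_tilt β t (tilt_sum β t)
  rw [relEnt_self] at this
  linarith

lemma mul_mean_sub_cBeta_le_relEntB {β : ℝ} {μ : ℝ × ℝ × ℝ} (hμ : IsProbVec μ) (t : ℝ) :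
    t * mean μ - cBeta β t ≤ relEntB β μ := by
  obtain ⟨h₁, h₂, h₃⟩ := tilt_pos β t
  have := relEnt_nonneg hμ (tilt_sum β t) h₁ h₂ h₃
  rw [relEnt_tilt β t hμ.2.2.2] at this
  linarith

lemma bddAbove_range_mul_sub_cBeta (β : ℝ) {z : ℝ} (hz : z ∈ Icc (-1 : ℝ) 1) :
    BddAbove (range fun t => t * z - cBeta β t) := by
  refine ⟨-log (rhoBeta β).2.2, ?_⟩
  rintro _ ⟨t, rfl⟩
  have := abs_add_log_le_cBeta β t
  have : t * z ≤ |t| := (le_abs_self _).trans <| by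
    rw [abs_mul]; exact mul_le_of_le_one_right (abs_nonneg t) (abs_le.2 hz)
  linarith

lemma Jbeta_mean_le_relEntB {β : ℝ} {μ : ℝ × ℝ × ℝ} (hμ : IsProbVec μ) :
    Jbeta β (mean μ) ≤ relEntB β μ :=
  ciSup_le (mul_mean_sub_cBeta_le_relEntB hμ)

lemma mul_sub_cBeta_le_Jbeta {β z : ℝ} (hz : z ∈ Icc (-1 : ℝ) 1) (t : ℝ) :
    t * z - cBeta β t ≤ Jbeta β z :=
  le_ciSup (bddAbove_range_mul_sub_cBeta β hz) t

lemma tendsto_tilt_atTop (β : ℝ) : Tendsto (tilt β) atTop (𝓝 (0, 0, 1)) := by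
  have hc : Tendsto (cBeta β) atTop atTop :=
    tendsto_atTop_mono
      (fun t => (add_le_add_left (le_abs_self t) _).trans (abs_add_log_le_cBeta β t))
      (tendsto_atTop_add_const_right _ _ tendsto_id)
  have h₁ : Tendsto (fun t => (tilt β t).1) atTop (𝓝 0) := by
    have h : Tendsto (fun t => -t - cBeta β t) atTop atBot := by
      simpa only [Function.comp_def, id, neg_add'] using
        tendsto_neg_atTop_atBot.comp (tendsto_id.atTop_add_atTop hc)
    rw [← mul_zero (rhoBeta β).1]
    exact (tendsto_exp_atBot.comp h).const_mul _
  have h₂ : Tendsto (fun t => (tilt β t).2.1) atTop (𝓝 0) := by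
    rw [← mul_zero (rhoBeta β).2.1]
    exact (tendsto_exp_atBot.comp (tendsto_neg_atTop_atBot.comp hc)).const_mul _
  have h₃ : Tendsto (fun t => (tilt β t).2.2) atTop (𝓝 1) := by
    have := (tendsto_const_nhds (x := (1 : ℝ))).sub (h₁.add h₂)
    simp only [add_zero, sub_zero] at this
    refine this.congr fun t => ?_
    linarith [tilt_sum β t]
  exact h₁.prodMk_nhds (h₂.prodMk_nhds h₃)

lemma mean_tilt_zero (β : ℝ) : mean (tilt β 0) = 0 := by
  simp [mean, tilt, rhoBeta]

lemma exists_mean_tilt_eq (β : ℝ) {z : ℝ} (hz : z ∈ Ico (0 : ℝ) 1) : ∃ t, mean (tilt β t) = z := by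
  have hm : Tendsto (fun t => mean (tilt β t)) atTop (𝓝 1) := by
    have h := (continuous_mean.tendsto _).comp (tendsto_tilt_atTop β)
    rwa [show mean (0, 0, 1) = 1 by norm_num [mean]] at h
  obtain ⟨b, hb₀, hb⟩ := ((eventually_ge_atTop 0).and (hm.eventually (lt_mem_nhds hz.2))).exists
  obtain ⟨t, -, ht⟩ :=
    intermediate_value_Icc hb₀ (continuous_mean.comp (continuous_tilt β)).continuousOn
      ⟨(mean_tilt_zero β).trans_le hz.1, hb.le⟩
  exact ⟨t, ht⟩

-- `1` is the mean of no tilt; it is reached as `t → ∞`, by continuity of `R(·|ρ_β)`.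
lemma relEntB_le_Jbeta_one (β : ℝ) : relEntB β (0, 0, 1) ≤ Jbeta β 1 := by
  refine le_of_tendsto (((continuous_relEntB β).tendsto _).comp (tendsto_tilt_atTop β)) ?_
  filter_upwards [eventually_ge_atTop 0] with t ht
  calc relEntB β (tilt β t) = t * mean (tilt β t) - cBeta β t := relEntB_tilt β t
    _ ≤ t * 1 - cBeta β t := by gcongr; exact (mean_mem_Icc (isProbVec_tilt β t)).2
    _ ≤ Jbeta β 1 := mul_sub_cBeta_le_Jbeta ⟨by norm_num, le_rfl⟩ t

lemma exists_relEntB_le_Jbeta_of_nonneg (β : ℝ) {z : ℝ} (hz : z ∈ Icc (0 : ℝ) 1) :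
    ∃ μ, IsProbVec μ ∧ mean μ = z ∧ relEntB β μ ≤ Jbeta β z := by
  rcases hz.2.lt_or_eq with hz₁ | rfl
  · obtain ⟨t, ht⟩ := exists_mean_tilt_eq β ⟨hz.1, hz₁⟩
    refine ⟨tilt β t, isProbVec_tilt β t, ht, ?_⟩
    rw [relEntB_tilt, ht]
    exact mul_sub_cBeta_le_Jbeta ⟨by linarith [hz.1], hz₁.le⟩ t
  · exact ⟨(0, 0, 1), ⟨le_rfl, le_rfl, zero_le_one, by norm_num⟩, by norm_num [mean],
      relEntB_le_Jbeta_one β⟩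

lemma exists_relEntB_le_Jbeta (β : ℝ) {z : ℝ} (hz : z ∈ Icc (-1 : ℝ) 1) :
    ∃ μ, IsProbVec μ ∧ mean μ = z ∧ relEntB β μ ≤ Jbeta β z := by
  rcases le_total 0 z with h | h
  · exact exists_relEntB_le_Jbeta_of_nonneg β ⟨h, hz.2⟩
  · obtain ⟨μ, hμ, hmean, hle⟩ :=
      exists_relEntB_le_Jbeta_of_nonneg β (z := -z) ⟨by linarith, by linarith [hz.1]⟩
    exact ⟨reflect μ, hμ.reflect, by rw [mean_reflect, hmean, neg_neg], by
      rwa [relEntB_reflect, ← Jbeta_neg]⟩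

theorem min_relEntB_eq_min_J_general (β K : ℝ) :
    (∃ μ : ℝ × ℝ × ℝ, IsProbVec μ ∧
      IsMinOn (fun ν : ℝ × ℝ × ℝ => relEntB β ν - β * K * (ν.2.2 - ν.1) ^ 2)
        {ν | IsProbVec ν} μ) ∧
    (∃ z ∈ Set.Icc (-1 : ℝ) 1,
      IsMinOn (fun z => Jbeta β z - β * K * z ^ 2) (Set.Icc (-1 : ℝ) 1) z) ∧
    sInf ((fun ν : ℝ × ℝ × ℝ => relEntB β ν - β * K * (ν.2.2 - ν.1) ^ 2) ''
        {ν | IsProbVec ν}) =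
      sInf ((fun z => Jbeta β z - β * K * z ^ 2) '' Set.Icc (-1 : ℝ) 1) := by
  obtain ⟨μ₀, hμ₀, hmin⟩ := isCompact_setOf_isProbVec.exists_isMinOn
    (f := fun ν => relEntB β ν - β * K * (ν.2.2 - ν.1) ^ 2)
    ⟨(1, 0, 0), zero_le_one, le_rfl, le_rfl, by norm_num⟩
    ((continuous_relEntB β).sub (by fun_prop)).continuousOn
  have hz₀ := mean_mem_Icc hμ₀
  have hle_J : ∀ z ∈ Icc (-1 : ℝ) 1,
      relEntB β μ₀ - β * K * (mean μ₀) ^ 2 ≤ Jbeta β z - β * K * z ^ 2 := fun z hz => by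
    obtain ⟨μ, hμ, rfl, hle⟩ := exists_relEntB_le_Jbeta β hz
    exact (hmin hμ).trans (sub_le_sub_right hle _)
  have hJ_le : Jbeta β (mean μ₀) - β * K * (mean μ₀) ^ 2 ≤ relEntB β μ₀ - β * K * (mean μ₀) ^ 2 :=
    sub_le_sub_right (Jbeta_mean_le_relEntB hμ₀) _
  have hJmin : IsMinOn (fun z => Jbeta β z - β * K * z ^ 2) (Icc (-1 : ℝ) 1) (mean μ₀) :=
    fun z hz => hJ_le.trans (hle_J z hz)
  refine ⟨⟨μ₀, hμ₀, hmin⟩, ⟨mean μ₀, hz₀, hJmin⟩, ?_⟩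
  rw [hmin.csInf_image_eq hμ₀, hJmin.csInf_image_eq hz₀]
  exact le_antisymm (hle_J _ hz₀) hJ_le

/-- For all `β > 0`, `K > 0`: the minimum over probability vectors of
`R(μ|ρ_β) − βK(μ₁ − μ₋₁)²` and the minimum over `z ∈ [-1,1]` of `J_β(z) − βKz²` are
both attained and equal. -/
theorem min_relEntB_eq_min_J (β K : ℝ) (hβ : 0 < β) (hK : 0 < K) :
    (∃ μ : ℝ × ℝ × ℝ, IsProbVec μ ∧
      IsMinOn (fun ν : ℝ × ℝ × ℝ => relEntB β ν - β * K * (ν.2.2 - ν.1) ^ 2)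
        {ν | IsProbVec ν} μ) ∧
    (∃ z ∈ Set.Icc (-1 : ℝ) 1,
      IsMinOn (fun z => Jbeta β z - β * K * z ^ 2) (Set.Icc (-1 : ℝ) 1) z) ∧
    sInf ((fun ν : ℝ × ℝ × ℝ => relEntB β ν - β * K * (ν.2.2 - ν.1) ^ 2) ''
        {ν | IsProbVec ν}) =
      sInf ((fun z => Jbeta β z - β * K * z ^ 2) '' Set.Icc (-1 : ℝ) 1) :=
  min_relEntB_eq_min_J_general β K
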